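/- The phase point operators define facets of the stabilizer polytope: assume additionally that d is an odd prime. For every u ∈ ZMod d × ZMod d there exists a family of d² − 1 matrices P_i : Matrix (ZMod d) (ZMod d) ℂ (i ranging over Fin (d² − 1)) such that (i) each P_i is a rank-one projector, i.e. P_i = v_i v_iᴴ for some vector v_i : ZMod d → ℂ with Σ_x ‖v_i x‖² = 1; (ii) each P_i is positively represented: Re(trace(A_w * P_i)) ≥ 0 for all w ∈ ZMod d × ZMod d; (iii) trace(A_u * P_i) = 0 for all i; and (iv) the family (P_i) is linearly independent over ℝ in the ℝ-vector space Matrix (ZMod d) (ZMod d) ℂ. -/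

import Mathlib

/-
The Wigner function `w ↦ tr (A_w P)` of a stabilizer state `P` is the indicator of a line of the
phase space `(ZMod d)²`: the basis state `e_t` gives the line `x₂ = t`, and the quadratic-phase state
`j ↦ ω^(a j² / 2 + t j) / √d` gives the line `x₁ = a x₂ + t`. Taking, in each of the `d + 1`
directions, the `d - 1` lines that miss `u` yields `d² - 1` positively represented stabilizer
states orthogonal to `A_u`. Their Wigner functions are linearly independent: pairing a relation
with `1_L - 1_L'`, where `L'` is the parallel to `L` through `u`, isolates the coefficient of `L`,
since every line not parallel to `L` meets `L` and `L'` once each.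
-/

open Matrix Complex

/-- ω = exp(2πi/d). -/
noncomputable def omegaC (d : ℕ) : ℂ := Complex.exp (2 * Real.pi * Complex.I / d)

/-- The clock matrix `Z`, with `Z x x = ω ^ x.val`. -/
noncomputable def Zmat (d : ℕ) : Matrix (ZMod d) (ZMod d) ℂ :=
  Matrix.diagonal (fun x => omegaC d ^ x.val)

/-- The shift matrix `X`, with `X x y = 1` iff `x = y + 1`. -/
noncomputable def Xmat (d : ℕ) : Matrix (ZMod d) (ZMod d) ℂ :=
  Matrix.of fun x y => if x = y + 1 then 1 else 0

/-- The Heisenberg–Weyl operator `T_a`. -/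
noncomputable def TW (d : ℕ) [NeZero d] (a : ZMod d × ZMod d) : Matrix (ZMod d) (ZMod d) ℂ :=
  omegaC d ^ ((-((2 : ZMod d)⁻¹ * a.1 * a.2)).val) • (Zmat d ^ a.1.val * Xmat d ^ a.2.val)

/-- The phase point operator at the origin, `A_0 = (1/d) • ∑ a, T_a`. -/
noncomputable def Apoint0 (d : ℕ) [NeZero d] : Matrix (ZMod d) (ZMod d) ℂ :=
  (1 / (d : ℂ)) • ∑ a : ZMod d × ZMod d, TW d a

/-- The phase point operator `A_u = T_u * A_0 * T_uᴴ`. -/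
noncomputable def Apoint (d : ℕ) [NeZero d] (u : ZMod d × ZMod d) : Matrix (ZMod d) (ZMod d) ℂ :=
  TW d u * Apoint0 d * (TW d u)ᴴ

section AffineLines

variable {R : Type*} [Ring R]

/-- The lines of `R × R` in direction `k` are the level sets of `lineCoord k`: the lines
`x₁ = a * x₂ + t` for `k = some a`, and the lines `x₂ = t` for `k = none`. -/
def lineCoord : Option R → R × R → R
  | some a, w => w.1 - a * w.2
  | none, w => w.2

def lineIndicator [DecidableEq R] (K : Type*) [Zero K] [One K] (k : Option R) (t : R) :
    R × R → K :=
  fun w => if lineCoord k w = t then 1 else 0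

variable {F : Type*} [Field F]

lemma lineCoord_pair_injective {k k' : Option F} (h : k ≠ k') :
    Function.Injective fun w => (lineCoord k w, lineCoord k' w) := by
  rintro ⟨x₁, x₂⟩ ⟨y₁, y₂⟩ hxy
  simp only [Prod.mk.injEq] at hxy ⊢
  obtain ⟨h₁, h₂⟩ := hxy
  rcases k with _ | a <;> rcases k' with _ | b <;> simp only [lineCoord] at h₁ h₂
  · exact absurd rfl h
  · exact ⟨by linear_combination h₂ + b * h₁, h₁⟩
  · exact ⟨by linear_combination h₁ + a * h₂, h₂⟩
  · have hab : a - b ≠ 0 := sub_ne_zero.mpr fun hab => h (congrArg some hab)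
    have hx₂ : x₂ = y₂ := mul_left_cancel₀ hab (by linear_combination h₂ - h₁)
    exact ⟨by linear_combination h₁ + a * hx₂, hx₂⟩

variable [Fintype F]

lemma sum_lineCoord_pair {M : Type*} [AddCommMonoid M] {k k' : Option F} (h : k ≠ k')
    (f : F → F → M) : ∑ w, f (lineCoord k w) (lineCoord k' w) = ∑ x, ∑ y, f x y := by
  rw [← Fintype.sum_prod_type']
  exact Fintype.sum_bijective _ (lineCoord_pair_injective h).bijective_of_finite _ _
    fun _ => rfl

lemma sum_lineCoord {M : Type*} [AddCommMonoid M] (k : Option F) (f : F → M) :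
    ∑ w, f (lineCoord k w) = Fintype.card F • ∑ x, f x := by
  have hk : k ≠ k.elim (some 0) fun _ => none := by cases k <;> simp
  simp only [sum_lineCoord_pair hk fun x _ => f x, Finset.sum_const, Finset.card_univ,
    Finset.smul_sum]

variable [DecidableEq F] (K : Type*)

lemma lineIndicator_dotProduct [Semiring K] (k k' : Option F) (s s' : F) :
    lineIndicator K k s ⬝ᵥ lineIndicator K k' s' =
      if k = k' then (if s = s' then (Fintype.card F : K) else 0) else 1 := by
  unfold dotProduct lineIndicator
  split_ifs with hk hs
  · subst hk hs
    rw [sum_lineCoord k fun x => (if x = s then (1 : K) else 0) * (if x = s then 1 else 0)]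
    simp
  · subst hk
    rw [sum_lineCoord k fun x => (if x = s then (1 : K) else 0) * (if x = s' then 1 else 0)]
    simp [Ne.symm hs]
  · rw [sum_lineCoord_pair hk fun x y => (if x = s then (1 : K) else 0) * (if y = s' then 1 else 0)]
    simp

theorem linearIndependent_lineIndicator [Field K] [CharZero K] (u : F × F) :
    LinearIndependent K fun i : Option F × {δ : F // δ ≠ 0} =>
      lineIndicator K i.1 (lineCoord i.1 u + i.2) := by
  rw [Fintype.linearIndependent_iff]
  intro g hg ⟨k₀, δ₀⟩
  let test := lineIndicator K k₀ (lineCoord k₀ u + δ₀) - lineIndicator K k₀ (lineCoord k₀ u)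
  have htest : ∀ i : Option F × {δ : F // δ ≠ 0},
      test ⬝ᵥ lineIndicator K i.1 (lineCoord i.1 u + i.2) =
        if i = (k₀, δ₀) then (Fintype.card F : K) else 0 := by
    rintro ⟨k, δ, hδ⟩
    rw [sub_dotProduct, lineIndicator_dotProduct, lineIndicator_dotProduct]
    by_cases hk : k₀ = k
    · subst hk
      simp [hδ, Subtype.ext_iff, eq_comm]
    · simp [hk, Ne.symm hk]
  have h := congrArg (test ⬝ᵥ ·) hg
  simp only [dotProduct_sum, dotProduct_smul, htest, smul_eq_mul, mul_ite, mul_zero,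
    Finset.sum_ite_eq', Finset.mem_univ, if_true, dotProduct_zero] at h
  exact (mul_eq_zero.mp h).resolve_right (Nat.cast_ne_zero.mpr Fintype.card_ne_zero)

end AffineLines

section PhasePointOperators

variable {d : ℕ}

lemma two_mul_inv_two (hodd : Odd d) : (2 : ZMod d) * 2⁻¹ = 1 :=
  ZMod.mul_inv_of_unit 2 <| by
    exact_mod_cast (ZMod.isUnit_iff_coprime 2 d).mpr (Nat.coprime_two_left.mpr hodd)

lemma two_mul_eq_zero_iff (hodd : Odd d) {x : ZMod d} : 2 * x = 0 ↔ x = 0 :=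
  ⟨fun h => by linear_combination 2⁻¹ * h - x * two_mul_inv_two hodd, fun h => by rw [h, mul_zero]⟩

variable [NeZero d]

lemma omegaC_pow (n : ℕ) : omegaC d ^ n = ZMod.stdAddChar (n : ZMod d) := by
  rw [ZMod.stdAddChar_apply, ZMod.toCircle_natCast, omegaC, ← Complex.exp_nat_mul]
  ring_nf

lemma omegaC_pow_val (x : ZMod d) : omegaC d ^ x.val = ZMod.stdAddChar x := by
  rw [omegaC_pow, ZMod.natCast_zmod_val]

lemma Xmat_pow_apply (n : ℕ) (j k : ZMod d) :
    (Xmat d ^ n) j k = if j = k + n then 1 else 0 := by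
  induction n generalizing k with
  | zero => simp [Matrix.one_apply]
  | succ n ih =>
    rw [pow_succ, Matrix.mul_apply, Finset.sum_eq_single (k + 1)
      (fun m _ hm => by simp [Xmat, hm]) (by simp), ih]
    simp [Xmat, add_assoc, add_comm (1 : ZMod d)]

lemma TW_apply (a : ZMod d × ZMod d) (j k : ZMod d) :
    TW d a j k = if k = j - a.2 then ZMod.stdAddChar (a.1 * j - 2⁻¹ * a.1 * a.2) else 0 := by
  simp only [TW, Zmat, Matrix.smul_apply, Matrix.diagonal_pow, Matrix.diagonal_mul,
    Xmat_pow_apply, ZMod.natCast_zmod_val, Pi.pow_apply, omegaC_pow_val]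
  rw [← AddChar.map_nsmul_eq_pow, nsmul_eq_mul, ZMod.natCast_zmod_val]
  by_cases h : k = j - a.2
  · rw [if_pos (by rw [h]; ring), if_pos h, mul_one, smul_eq_mul, ← AddChar.map_add_eq_mul]
    congr 1
    ring
  · rw [if_neg fun h' => h (by rw [h']; ring), if_neg h, mul_zero, smul_zero]

lemma star_stdAddChar (x : ZMod d) : star (ZMod.stdAddChar x) = ZMod.stdAddChar (-x) := by
  rw [AddChar.map_neg_eq_conj, Complex.star_def]

lemma Apoint0_apply (hodd : Odd d) (j k : ZMod d) :
    Apoint0 d j k = if k = -j then 1 else 0 := by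
  have h2 := two_mul_inv_two hodd
  have hsum : ∑ a : ZMod d × ZMod d, TW d a j k =
      ∑ x : ZMod d, ZMod.stdAddChar (x * (2⁻¹ * (j + k))) := by
    rw [Fintype.sum_prod_type]
    refine Finset.sum_congr rfl fun x _ => ?_
    simp only [TW_apply]
    rw [Finset.sum_eq_single (j - k) (fun y _ hy => if_neg fun h => hy (by linear_combination h))
      (by simp), if_pos (by ring)]
    congr 1
    linear_combination (-(x * j)) * h2
  rw [Apoint0, Matrix.smul_apply, Matrix.sum_apply, hsum,
    AddChar.sum_mulShift _ (ZMod.isPrimitive_stdAddChar d), ZMod.card]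
  have hiff : 2⁻¹ * (j + k) = 0 ↔ k = -j :=
    ⟨fun h => by linear_combination 2 * h - (j + k) * h2, fun h => by rw [h]; ring⟩
  simp only [hiff]
  split_ifs <;> simp [NeZero.ne d]

lemma Apoint_apply (hodd : Odd d) (w : ZMod d × ZMod d) (j k : ZMod d) :
    Apoint d w j k = if j + k = 2 * w.2 then ZMod.stdAddChar (w.1 * (j - k)) else 0 := by
  have hTA : ∀ n, (TW d w * Apoint0 d) j n =
      if n = w.2 - j then ZMod.stdAddChar (w.1 * j - 2⁻¹ * w.1 * w.2) else 0 := by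
    intro n
    rw [Matrix.mul_apply, Finset.sum_eq_single (j - w.2) (fun m _ hm => by simp [TW_apply, hm])
      (by simp), TW_apply, if_pos rfl, Apoint0_apply hodd, neg_sub, mul_ite, mul_one, mul_zero]
  simp only [Apoint, Matrix.mul_apply, hTA, conjTranspose_apply, TW_apply, ite_mul, zero_mul,
    Finset.sum_ite_eq', Finset.mem_univ, if_true, apply_ite star, star_zero, star_stdAddChar,
    mul_ite, mul_zero]
  by_cases h : j + k = 2 * w.2
  · rw [if_pos (by linear_combination h), if_pos h, ← AddChar.map_add_eq_mul]
    congr 1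
    ring
  · rw [if_neg fun h' => h (by linear_combination h'), if_neg h]

end PhasePointOperators

section StabilizerStates

variable {d : ℕ} [NeZero d]

lemma trace_Apoint_mul_vecMulVec (hodd : Odd d) (w : ZMod d × ZMod d) (v : ZMod d → ℂ) :
    (Apoint d w * vecMulVec v (star v)).trace =
      ∑ j, ZMod.stdAddChar ((j - w.2) * (2 * w.1)) * (v (2 * w.2 - j) * star (v j)) := by
  refine Finset.sum_congr rfl fun j _ => ?_
  rw [diag_apply, Matrix.mul_apply, Finset.sum_eq_single (2 * w.2 - j)
    (fun k _ hk => by rw [Apoint_apply hodd, if_neg fun h => hk (by linear_combination h), zero_mul])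
    (by simp), Apoint_apply hodd, if_pos (by ring), vecMulVec_apply, Pi.star_apply]
  congr 2
  ring

noncomputable def stabVec : Option (ZMod d) → ZMod d → ZMod d → ℂ
  | none, t => Pi.single t 1
  | some a, t => fun j => (Real.sqrt d : ℂ)⁻¹ * ZMod.stdAddChar (2⁻¹ * a * j ^ 2 + t * j)

lemma sum_norm_stabVec_sq (k : Option (ZMod d)) (t : ZMod d) :
    ∑ x, ‖stabVec k t x‖ ^ 2 = 1 := by
  cases k with
  | none => simp [stabVec, Pi.single_apply, apply_ite]
  | some a =>
    have hd : (0 : ℝ) < d := Nat.cast_pos.mpr (Nat.pos_of_ne_zero (NeZero.ne d))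
    simp [stabVec, AddChar.norm_apply, Real.sq_sqrt hd.le, hd.ne']

noncomputable def stabProj (k : Option (ZMod d)) (t : ZMod d) : Matrix (ZMod d) (ZMod d) ℂ :=
  vecMulVec (stabVec k t) (star (stabVec k t))

lemma trace_Apoint_mul_stabProj (hodd : Odd d) (w : ZMod d × ZMod d) (k : Option (ZMod d))
    (t : ZMod d) :
    (Apoint d w * stabProj k t).trace = if lineCoord k w = t then 1 else 0 := by
  rw [stabProj, trace_Apoint_mul_vecMulVec hodd]
  cases k with
  | none =>
    have hiff : 2 * w.2 - t = t ↔ w.2 = t :=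
      ⟨fun h => sub_eq_zero.mp ((two_mul_eq_zero_iff hodd).mp (by linear_combination h)),
        fun h => by rw [h]; ring⟩
    rw [Finset.sum_eq_single t (fun j _ hj => by simp [stabVec, hj]) (by simp)]
    simp only [stabVec, Pi.single_apply, hiff, lineCoord, if_true, star_one, mul_one]
    split_ifs with h <;> simp [h]
  | some a =>
    have hsq : (Real.sqrt d : ℂ)⁻¹ * (Real.sqrt d : ℂ)⁻¹ = (d : ℂ)⁻¹ := by
      rw [← mul_inv, ← Complex.ofReal_mul, Real.mul_self_sqrt (Nat.cast_nonneg d),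
        Complex.ofReal_natCast]
    have hterm : ∀ j, ZMod.stdAddChar ((j - w.2) * (2 * w.1)) *
        (stabVec (some a) t (2 * w.2 - j) * star (stabVec (some a) t j)) =
          (d : ℂ)⁻¹ * ZMod.stdAddChar ((j - w.2) * (2 * (lineCoord (some a) w - t))) := by
      intro j
      simp only [stabVec, lineCoord, star_mul', star_stdAddChar, star_inv₀, Complex.star_def,
        Complex.conj_ofReal]
      rw [show ∀ (x y z : ZMod d) (c : ℂ), ZMod.stdAddChar x * (c * ZMod.stdAddChar y *
          (c * ZMod.stdAddChar z)) = c * c * ZMod.stdAddChar (x + y + z) from fun x y z c => by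
        rw [AddChar.map_add_eq_mul, AddChar.map_add_eq_mul]; ring, hsq]
      congr 2
      linear_combination (2 * a * w.2 ^ 2 - 2 * a * w.2 * j) * two_mul_inv_two hodd
    rw [Finset.sum_congr rfl fun j _ => hterm j, ← Finset.mul_sum,
      Fintype.sum_equiv (Equiv.subRight w.2)
        (fun j => ZMod.stdAddChar ((j - w.2) * (2 * (lineCoord (some a) w - t))))
        (fun x => ZMod.stdAddChar (x * (2 * (lineCoord (some a) w - t)))) fun _ => rfl,
      AddChar.sum_mulShift _ (ZMod.isPrimitive_stdAddChar d), ZMod.card]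
    simp only [two_mul_eq_zero_iff hodd, sub_eq_zero]
    split_ifs <;> simp [NeZero.ne d]

end StabilizerStates

noncomputable def wignerMap (d : ℕ) [NeZero d] :
    Matrix (ZMod d) (ZMod d) ℂ →ₗ[ℝ] (ZMod d × ZMod d → ℝ) where
  toFun P w := (Apoint d w * P).trace.re
  map_add' P Q := by ext w; simp [Matrix.mul_add]
  map_smul' c P := by ext w; simp

lemma wignerMap_stabProj {d : ℕ} [NeZero d] (hodd : Odd d) (k : Option (ZMod d)) (t : ZMod d) :
    wignerMap d (stabProj k t) = lineIndicator ℝ k t := by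
  ext w
  simp only [wignerMap, LinearMap.coe_mk, AddHom.coe_mk, trace_Apoint_mul_stabProj hodd,
    lineIndicator, apply_ite Complex.re, one_re, zero_re]

lemma card_option_prod_subtype_ne_zero (F : Type*) [Fintype F] [DecidableEq F] [Zero F] :
    Fintype.card (Option F × {δ : F // δ ≠ 0}) = Fintype.card F ^ 2 - 1 := by
  rw [Fintype.card_prod, Fintype.card_option, Fintype.card_subtype_compl, Fintype.card_subtype_eq,
    ← one_pow 2, Nat.sq_sub_sq, one_pow]

/-- The phase point operators define facets of the stabilizer polytope (odd prime `d`). -/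
theorem phase_point_operators_are_facets (d : ℕ) [NeZero d] (hodd : Odd d) (hp : d.Prime)
    (u : ZMod d × ZMod d) :
    ∃ P : Fin (d ^ 2 - 1) → Matrix (ZMod d) (ZMod d) ℂ,
      (∀ i, ∃ v : ZMod d → ℂ, (∑ x : ZMod d, ‖v x‖ ^ 2) = 1 ∧
          P i = Matrix.vecMulVec v (star v)) ∧
      (∀ i, ∀ w : ZMod d × ZMod d, 0 ≤ ((Apoint d w * P i).trace).re) ∧
      (∀ i, (Apoint d u * P i).trace = 0) ∧
      LinearIndependent ℝ P := by
  have := Fact.mk hp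
  let e : Fin (d ^ 2 - 1) ≃ Option (ZMod d) × {δ : ZMod d // δ ≠ 0} :=
    Fintype.equivOfCardEq (by rw [Fintype.card_fin, card_option_prod_subtype_ne_zero, ZMod.card])
  refine ⟨fun i => stabProj (e i).1 (lineCoord (e i).1 u + (e i).2),
    fun i => ⟨_, sum_norm_stabVec_sq _ _, rfl⟩, fun i w => ?_, fun i => ?_, ?_⟩
  · rw [trace_Apoint_mul_stabProj hodd]
    split_ifs <;> simp
  · rw [trace_Apoint_mul_stabProj hodd, if_neg]
    simpa using (e i).2.2
  · refine LinearIndependent.of_comp (wignerMap d) ?_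
    simp only [Function.comp_def, wignerMap_stabProj hodd]
    exact (linearIndependent_lineIndicator ℝ u).comp e e.injective
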